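/- Let k be a field of characteristic zero and let t(n,k) denote the Lie algebra of upper triangular n×n matrices over k (with bracket the matrix commutator). Then t(n,k) admits a Novikov structure if and only if n ≤ 2. -/

import Mathlib

/-- A Novikov structure on a Lie algebra `g` over `k`: a bilinear product satisfying
left-symmetry, the Novikov identity, and whose commutator is the Lie bracket. -/
def HasNovikovStructure (k g : Type*) [Field k] [LieRing g] [LieAlgebra k g] : Prop :=
  ∃ mul : g →ₗ[k] g →ₗ[k] g,
    (∀ x y z : g,
      mul x (mul y z) - mul (mul x y) z = mul y (mul x z) - mul (mul y x) z) ∧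
    (∀ x y z : g, mul (mul x y) z = mul (mul x z) y) ∧
    (∀ x y : g, mul x y - mul y x = ⁅x, y⁆)

attribute [local instance 100] LieRing.ofAssociativeRing

/-- The Lie algebra `t(n,k)` of upper triangular `n × n` matrices over `k`,
as a Lie subalgebra of the matrix Lie algebra (bracket `[M,N] = MN − NM`). -/
def upperTriangularLie (n : ℕ) (k : Type*) [Field k] :
    LieSubalgebra k (Matrix (Fin n) (Fin n) k) where
  carrier := {M | ∀ i j : Fin n, j < i → M i j = 0}
  add_mem' := by
    intro M N hM hN i j hij
    simp [Matrix.add_apply, hM i j hij, hN i j hij]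
  zero_mem' := by intro i j hij; simp
  smul_mem' := by
    intro c M hM i j hij
    simp [Matrix.smul_apply, hM i j hij]
  lie_mem' := by
    intro M N hM hN i j hij
    have key : ∀ P Q : Matrix (Fin n) (Fin n) k,
        (∀ i j : Fin n, j < i → P i j = 0) → (∀ i j : Fin n, j < i → Q i j = 0) →
        (P * Q) i j = 0 := by
      intro P Q hP hQ
      rw [Matrix.mul_apply]
      apply Finset.sum_eq_zero
      intro l _
      rcases lt_or_ge l i with h | h
      · rw [hP i l h, zero_mul]
      · rw [hQ l j (lt_of_lt_of_le hij h), mul_zero]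
    show (⁅M, N⁆ : Matrix (Fin n) (Fin n) k) i j = 0
    rw [Ring.lie_def]
    simp [Matrix.sub_apply, key M N hM hN, key N M hN hM]

/-! In any Novikov algebra the three axioms combine to `2 ([x, z] · y) = [x, z · y] - [z, x · y]`.
For `n ≥ 3`, instances of this identity and of `x · y - y · x = [x, y]` among the matrix units
`E₀₀, E₁₁, E₀₁, E₁₂, E₀₂`, read off at single entries, successively force
`(E₀₁ · E₁₂)₀₂ = 0` and `(E₁₂ · E₀₁)₀₂ = 0`, contradicting `[E₀₁, E₁₂] = E₀₂`.
Conversely `t(0, k)` and `t(1, k)` are abelian, while `t(2, k)` has the bracket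
`[x, y] = (φ x ψ y - φ y ψ x) E₀₁` with `φ x = x₀₀ - x₁₁` and `ψ x = x₀₁`; since `φ E₀₁ = 0`,
the product `x · y = φ x ψ y E₀₁` is Novikov. -/

section NovikovIdentity

variable {k g : Type*} [CommRing k] [LieRing g] [LieAlgebra k g] (mul : g →ₗ[k] g →ₗ[k] g)

theorem two_smul_mul_lie_eq_lie_mul_sub_lie_mul
    (hls : ∀ x y z : g,
      mul x (mul y z) - mul (mul x y) z = mul y (mul x z) - mul (mul y x) z)
    (hnov : ∀ x y z : g, mul (mul x y) z = mul (mul x z) y)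
    (hcomm : ∀ x y : g, mul x y - mul y x = ⁅x, y⁆) (x y z : g) :
    (2 : k) • mul ⁅x, z⁆ y = ⁅x, mul z y⁆ - ⁅z, mul x y⁆ := by
  rw [← hcomm x z, ← hcomm x (mul z y), ← hcomm z (mul x y), map_sub, LinearMap.sub_apply]
  linear_combination (norm := module) hls z x y - hnov x y z + hnov z y x

end NovikovIdentity

section Existence

variable {k g : Type*} [Field k] [LieRing g] [LieAlgebra k g]

theorem hasNovikovStructure_of_isLieAbelian [IsLieAbelian g] : HasNovikovStructure k g :=
  ⟨0, by simp, by simp, by simp [trivial_lie_zero]⟩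

theorem hasNovikovStructure_of_lie_eq_smul (φ ψ : g →ₗ[k] k) (e : g) (he : φ e = 0)
    (hlie : ∀ x y : g, ⁅x, y⁆ = (φ x * ψ y - φ y * ψ x) • e) : HasNovikovStructure k g := by
  let mul := ((LinearMap.mul k k).compl₁₂ φ ψ).compr₂ (LinearMap.toSpanSingleton k g e)
  have hmul (x y : g) : mul x y = (φ x * ψ y) • e := rfl
  have hmul_mul (x y z : g) : mul (mul x y) z = 0 := by simp [hmul, he]
  refine ⟨mul, fun x y z => ?_, fun x y z => by rw [hmul_mul, hmul_mul], fun x y => ?_⟩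
  · rw [hmul_mul, hmul_mul, hmul y, hmul x z, map_smul, map_smul, hmul, hmul, smul_smul,
      smul_smul]
    ring_nf
  · rw [hmul, hmul, hlie, sub_smul]

end Existence

namespace Matrix

variable {ι R : Type*} [Fintype ι]

theorem lie_single_apply [DecidableEq ι] [Ring R] (a b : ι) (c : R) (M : Matrix ι ι R)
    (i j : ι) :
    ⁅single a b c, M⁆ i j =
      (if i = a then c * M b j else 0) - (if j = b then M i a * c else 0) := by
  rw [Ring.lie_def, sub_apply]
  congr 1
  · split_ifs with h
    · rw [h, single_mul_apply_same]
    · exact single_mul_apply_of_ne _ _ _ _ _ h M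
  · split_ifs with h
    · rw [h, mul_single_apply_same]
    · exact mul_single_apply_of_ne _ _ _ _ _ h M

theorem commute_of_subsingleton [Subsingleton ι] [CommSemiring R] (M N : Matrix ι ι R) :
    Commute M N := by
  ext i j
  obtain rfl := Subsingleton.elim i j
  simp [mul_apply, Fintype.sum_subsingleton _ i, mul_comm]

end Matrix

namespace LieSubalgebra

variable {ι k : Type*} [Fintype ι]

theorem isLieAbelian_of_subsingleton [Subsingleton ι] [CommRing k]
    (L : LieSubalgebra k (Matrix ι ι k)) : IsLieAbelian L :=
  ⟨fun x y => Subtype.ext (Matrix.commute_of_subsingleton x.1 y.1).lie_eq⟩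

open Matrix in
theorem not_hasNovikovStructure_of_single_mem [DecidableEq ι] [Field k]
    (L : LieSubalgebra k (Matrix ι ι k)) {a b c : ι} (hab : a ≠ b) (hbc : b ≠ c) (hac : a ≠ c)
    (haa : single a a 1 ∈ L) (hbb : single b b 1 ∈ L) (hab' : single a b 1 ∈ L)
    (hbc' : single b c 1 ∈ L) (hac' : single a c 1 ∈ L) :
    ¬ HasNovikovStructure k L := by
  rintro ⟨mul, hls, hnov, hcomm⟩
  obtain ⟨h₁, ch₁⟩ : ∃ x : L, (x : Matrix ι ι k) = single a a 1 := ⟨⟨_, haa⟩, rfl⟩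
  obtain ⟨h₂, ch₂⟩ : ∃ x : L, (x : Matrix ι ι k) = single b b 1 := ⟨⟨_, hbb⟩, rfl⟩
  obtain ⟨e, ce⟩ : ∃ x : L, (x : Matrix ι ι k) = single a b 1 := ⟨⟨_, hab'⟩, rfl⟩
  obtain ⟨f, cf⟩ : ∃ x : L, (x : Matrix ι ι k) = single b c 1 := ⟨⟨_, hbc'⟩, rfl⟩
  obtain ⟨g, cg⟩ : ∃ x : L, (x : Matrix ι ι k) = single a c 1 := ⟨⟨_, hac'⟩, rfl⟩
  have h₁h₂ : ⁅h₁, h₂⁆ = 0 :=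
    Subtype.ext (by simp [Ring.lie_def, ch₁, ch₂, single_mul_single_of_ne, hab, hab.symm])
  have h₁e : ⁅h₁, e⁆ = e :=
    Subtype.ext (by simp [Ring.lie_def, ch₁, ce, single_mul_single_of_ne, hab.symm])
  have eh₂ : ⁅e, h₂⁆ = e :=
    Subtype.ext (by simp [Ring.lie_def, ch₂, ce, single_mul_single_of_ne, hab.symm])
  have h₁f : ⁅h₁, f⁆ = 0 :=
    Subtype.ext (by simp [Ring.lie_def, ch₁, cf, single_mul_single_of_ne, hab, hac.symm])
  have ef : ⁅e, f⁆ = g :=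
    Subtype.ext (by simp [Ring.lie_def, ce, cf, cg, single_mul_single_of_ne, hac.symm])
  have key := two_smul_mul_lie_eq_lie_mul_sub_lie_mul mul hls hnov hcomm
  have entry {x y : L} (hxy : x = y) (i j : ι) :
      (x : Matrix ι ι k) i j = (y : Matrix ι ι k) i j := by
    rw [hxy]
  have hf₁ : (mul h₁ f : Matrix ι ι k) b c = 0 := by
    simpa [h₁h₂, ch₁, ch₂, lie_single_apply, hab.symm, hbc.symm, hac.symm]
      using entry (key h₁ f h₂) b c
  have hef : (mul e f : Matrix ι ι k) a c = 0 := by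
    have := entry (key h₁ f e) a c
    simp [h₁e, ch₁, ce, lie_single_apply, hbc.symm, hac.symm] at this
    linear_combination this - hf₁
  have hf₂ : (mul h₂ f : Matrix ι ι k) b c = 0 := by
    have := entry (key e f h₂) a c
    simp [eh₂, ch₂, ce, lie_single_apply, hab, hbc.symm] at this
    linear_combination -this + 2 * hef
  have hfh : (mul f h₂ : Matrix ι ι k) b c = -1 := by
    have := entry (hcomm f h₂) b c
    simp [ch₂, cf, lie_single_apply, hbc] at this
    linear_combination this + hf₂
  have hgh : (mul g h₂ : Matrix ι ι k) a c = 0 := by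
    have h₂g := entry (key h₁ g h₂) a c
    have comm := entry (hcomm h₂ g) a c
    simp [h₁h₂, ch₁, ch₂, cg, lie_single_apply, hab, hbc.symm, hac.symm] at h₂g comm
    linear_combination -comm - h₂g
  have heh : (mul e h₂ : Matrix ι ι k) a b = 1 := by
    have := entry (key e h₂ f) a c
    simp [ef, ce, cf, lie_single_apply, hab, hbc.symm] at this
    linear_combination -this + 2 * hgh - hfh
  have he₂ : (mul h₂ e : Matrix ι ι k) a b = 0 := by
    have := entry (hcomm h₂ e) a b
    simp [ch₂, ce, lie_single_apply, hab] at this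
    linear_combination this + heh
  have he₁ : (mul h₁ e : Matrix ι ι k) a b = 0 := by
    have := entry (key h₁ e h₂) a b
    simp [h₁h₂, ch₁, ch₂, lie_single_apply, hab, hab.symm] at this
    linear_combination -this - he₂
  have hfe : (mul f e : Matrix ι ι k) a c = 0 := by
    have := entry (key h₁ e f) a c
    simp [h₁f, ch₁, cf, lie_single_apply, hab, hac.symm] at this
    linear_combination -this - he₁
  simpa [ef, cg, hef, hfe] using entry (hcomm e f) a c

end LieSubalgebra

section UpperTriangular

variable {k : Type*} [Field k]

theorem single_mem_upperTriangularLie {n : ℕ} {p q : Fin n} (hpq : p ≤ q) (c : k) :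
    Matrix.single p q c ∈ upperTriangularLie n k := by
  intro i j hji
  rw [Matrix.single_apply_of_ne]
  rintro ⟨rfl, rfl⟩
  exact (hpq.trans_lt hji).false

theorem not_hasNovikovStructure_upperTriangularLie {n : ℕ} (hn : 3 ≤ n) :
    ¬ HasNovikovStructure k (upperTriangularLie n k) := by
  let i : Fin n := ⟨0, by omega⟩
  let j : Fin n := ⟨1, by omega⟩
  let l : Fin n := ⟨2, by omega⟩
  have hij : i < j := Fin.mk_lt_mk.2 zero_lt_one
  have hjl : j < l := Fin.mk_lt_mk.2 one_lt_two
  exact (upperTriangularLie n k).not_hasNovikovStructure_of_single_mem hij.ne hjl.ne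
    (hij.trans hjl).ne (single_mem_upperTriangularLie le_rfl 1)
    (single_mem_upperTriangularLie le_rfl 1) (single_mem_upperTriangularLie hij.le 1)
    (single_mem_upperTriangularLie hjl.le 1) (single_mem_upperTriangularLie (hij.trans hjl).le 1)

theorem hasNovikovStructure_upperTriangularLie_two :
    HasNovikovStructure k (upperTriangularLie 2 k) := by
  let entry (i j : Fin 2) : upperTriangularLie 2 k →ₗ[k] k :=
    Matrix.entryLinearMap k k i j ∘ₗ (upperTriangularLie 2 k).incl.toLinearMap
  refine hasNovikovStructure_of_lie_eq_smul (entry 0 0 - entry 1 1) (entry 0 1)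
    ⟨Matrix.single 0 1 1, single_mem_upperTriangularLie zero_le_one 1⟩ (by simp [entry])
    fun x y => ?_
  have hx : x.1 1 0 = 0 := x.2 1 0 Fin.zero_lt_one
  have hy : y.1 1 0 = 0 := y.2 1 0 Fin.zero_lt_one
  ext i j
  fin_cases i <;> fin_cases j <;> simp [entry, Ring.lie_def, Matrix.mul_apply, hx, hy] <;> ring

end UpperTriangular

theorem upperTriangularLie_hasNovikov_iff
    (k : Type*) [Field k] (n : ℕ) :
    HasNovikovStructure k (upperTriangularLie n k) ↔ n ≤ 2 := by
  refine ⟨fun h => ?_, fun hn => ?_⟩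
  · by_contra! hn
    exact not_hasNovikovStructure_upperTriangularLie hn h
  obtain hn | rfl := Nat.lt_or_eq_of_le hn
  · have := Fin.subsingleton_iff_le_one.2 (Nat.lt_succ_iff.1 hn)
    have := (upperTriangularLie n k).isLieAbelian_of_subsingleton
    exact hasNovikovStructure_of_isLieAbelian
  · exact hasNovikovStructure_upperTriangularLie_two
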